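/- Let H be a connected non-star graph, P_n(H) the pyramid of height n, with vertices colored uniformly with c_n = n^{1/(|V(H)|-1)} colors. Then the probability that P_n(H) contains a monochromatic copy of H is at most binomial(|V(H)|-1, 2)/c_n, which tends to 0 as n → ∞. Hence T(H, P_n(H)) → 0 in probability. -/

import Mathlib

open Finset Filter

/-- The star graph `K_{1,r}` : one center (vertex `0`) joined to `r` leaves. -/
def starGraph (r : ℕ) : SimpleGraph (Fin (r + 1)) :=
  SimpleGraph.fromRel (fun i _ => i = 0)

/-- The pyramid of `H` of height `n`. -/
def pyramid {m : ℕ} (H : SimpleGraph (Fin (m + 1))) (n : ℕ) : SimpleGraph (Fin m ⊕ Fin n) :=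
  SimpleGraph.fromRel (fun x y =>
    match x, y with
    | Sum.inl u, Sum.inl v => H.Adj u.castSucc v.castSucc
    | Sum.inl u, Sum.inr _ => H.Adj u.castSucc (Fin.last m)
    | _, _ => False)

/-- Number of monochromatic copies of `F` in `G` under the coloring `f`. -/
noncomputable def monoCopyCount {α : Type*} (F : SimpleGraph α) {V : Type*} (G : SimpleGraph V)
    {c : ℕ} (f : V → Fin c) : ℕ :=
  Nat.card {A : G.Subgraph //
    Nonempty (A.coe ≃g F) ∧ ∀ u ∈ A.verts, ∀ v ∈ A.verts, f u = f v}

/-- Probability (in a uniform `c n`-coloring of the pyramid) that some monochromatic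
copy of `H` exists. -/
noncomputable def pyrProb {m : ℕ} (H : SimpleGraph (Fin (m + 1))) (c : ℕ → ℕ) (n : ℕ) : ℝ :=
  (Nat.card {f : Fin m ⊕ Fin n → Fin (c n) //
      0 < monoCopyCount H (pyramid H n) f} : ℝ) /
    (c n : ℝ) ^ Fintype.card (Fin m ⊕ Fin n)

/-!
Every edge of the pyramid `P_n(H)` has an endpoint among the `m = |V(H)| - 1` base vertices,
since the apexes are pairwise non-adjacent. A copy of `H` using at most one base vertex `b` would
therefore have all its edges through `b`, and a connected graph all of whose edges pass through
one vertex is a star. So every copy of `H` meets two base vertices, and a monochromatic copy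
forces two of the `m` base vertices to share a colour. A union bound over the `C(m, 2)` pairs,
each sharing a colour with probability `1 / c_n`, gives the bound, and `c_n → ∞`.
-/

namespace SimpleGraph

variable {V : Type*}

lemma exists_forall_adj_eq_of_subsingleton [Nonempty V] {G : SimpleGraph V} {S : Set V}
    (hS : S.Subsingleton) (hcov : ∀ p q, G.Adj p q → p ∈ S ∨ q ∈ S) :
    ∃ b, ∀ p q, G.Adj p q → p = b ∨ q = b := by
  rcases S.eq_empty_or_nonempty with rfl | ⟨b, hb⟩
  · exact ⟨Classical.arbitrary V, fun p q h => by simpa using hcov p q h⟩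
  · exact ⟨b, fun p q h => (hcov p q h).imp (hS · hb) (hS · hb)⟩

lemma Preconnected.adj_of_forall_adj_eq {G : SimpleGraph V} (hG : G.Preconnected) {b x : V}
    (hb : ∀ p q, G.Adj p q → p = b ∨ q = b) (hx : x ≠ b) : G.Adj x b := by
  obtain ⟨w⟩ := hG x b
  cases w with
  | nil => exact absurd rfl hx
  | cons h _ => exact (hb _ _ h).resolve_left hx ▸ h

end SimpleGraph

lemma nonempty_iso_starGraph_of_forall_adj_eq {r : ℕ} {G : SimpleGraph (Fin (r + 1))}
    (hG : G.Preconnected) {b : Fin (r + 1)} (hb : ∀ p q, G.Adj p q → p = b ∨ q = b) :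
    Nonempty (G ≃g starGraph r) := by
  refine ⟨⟨Equiv.swap b 0, fun {u v} => ?_⟩⟩
  simp only [starGraph, SimpleGraph.fromRel_adj, ne_eq, EmbeddingLike.apply_eq_iff_eq,
    Equiv.swap_apply_eq_iff, Equiv.swap_apply_right]
  constructor
  · rintro ⟨huv, rfl | rfl⟩
    · exact (hG.adj_of_forall_adj_eq hb (Ne.symm huv)).symm
    · exact hG.adj_of_forall_adj_eq hb huv
  · exact fun h => ⟨h.ne, hb u v h⟩

lemma pyramid_adj_isLeft {m n : ℕ} {H : SimpleGraph (Fin (m + 1))} {x y : Fin m ⊕ Fin n}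
    (h : (pyramid H n).Adj x y) : x.isLeft ∨ y.isLeft := by
  cases x <;> cases y <;> simp_all [pyramid]

lemma pyramid_copy_base_nontrivial {m n : ℕ} {H : SimpleGraph (Fin (m + 1))}
    (hconn : H.Preconnected) (hstar : ∀ r : ℕ, IsEmpty (H ≃g starGraph r))
    {A : (pyramid H n).Subgraph} (e : A.coe ≃g H) :
    {u : Fin m | Sum.inl u ∈ A.verts}.Nontrivial := by
  by_contra hbase
  rw [Set.not_nontrivial_iff] at hbase
  have hS : {x : Fin (m + 1) | (e.symm x : Fin m ⊕ Fin n).isLeft}.Subsingleton := by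
    intro x hx y hy
    obtain ⟨u, hu⟩ := Sum.isLeft_iff.mp hx
    obtain ⟨v, hv⟩ := Sum.isLeft_iff.mp hy
    have huv : u = v := hbase (show Sum.inl u ∈ A.verts from hu ▸ (e.symm x).2)
      (show Sum.inl v ∈ A.verts from hv ▸ (e.symm y).2)
    exact e.symm.injective (Subtype.ext (by rw [hu, hv, huv]))
  obtain ⟨b, hb⟩ := SimpleGraph.exists_forall_adj_eq_of_subsingleton hS fun p q h =>
    pyramid_adj_isLeft (e.symm.map_rel_iff.mpr h).adj_sub
  exact (hstar m).false (nonempty_iso_starGraph_of_forall_adj_eq hconn hb).some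

lemma not_injective_comp_inl_of_monoCopyCount_pos {m n c : ℕ} {H : SimpleGraph (Fin (m + 1))}
    (hconn : H.Preconnected) (hstar : ∀ r : ℕ, IsEmpty (H ≃g starGraph r))
    {f : Fin m ⊕ Fin n → Fin c} (hf : 0 < monoCopyCount H (pyramid H n) f) :
    ¬ Function.Injective (f ∘ Sum.inl) := by
  obtain ⟨⟨A, ⟨e⟩, hmono⟩⟩ := (Nat.card_pos_iff.mp hf).1
  obtain ⟨u, hu, v, hv, huv⟩ := pyramid_copy_base_nontrivial hconn hstar e
  exact fun hinj => huv (hinj (hmono _ hu _ hv))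

section Counting

variable {α β ι : Type*} [Fintype α] [DecidableEq α] [Fintype β] [DecidableEq β]

lemma card_filter_apply_eq_apply_le {a b : α} (hab : a ≠ b) :
    #{f : α → β | f a = f b} ≤ Fintype.card β ^ (Fintype.card α - 1) := by
  calc #{f : α → β | f a = f b}
      ≤ #(univ : Finset ({y // y ≠ b} → β)) := by
        refine card_le_card_of_injOn (fun f y => f y) (fun _ _ => mem_univ _) ?_
        intro f hf g hg hfg
        simp only [coe_filter, mem_univ, true_and, Set.mem_ofPred_eq] at hf hg
        funext y
        by_cases hy : y = b
        · rw [hy, ← hf, ← hg]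
          exact congrFun hfg ⟨a, hab⟩
        · exact congrFun hfg ⟨y, hy⟩
    _ = Fintype.card β ^ (Fintype.card α - 1) := by
        simp [Fintype.card_subtype_compl]

lemma card_filter_not_injective_comp_le [Fintype ι] [DecidableEq ι] {g : ι → α}
    (hg : Function.Injective g) :
    #{f : α → β | ¬ Function.Injective (f ∘ g)}
      ≤ (Fintype.card ι).choose 2 * Fintype.card β ^ (Fintype.card α - 1) := by
  have hcover : ({f : α → β | ¬ Function.Injective (f ∘ g)} : Finset (α → β)) ⊆
      (univ.powersetCard 2).biUnion fun t => {f | ∀ x ∈ t, ∀ y ∈ t, f (g x) = f (g y)} := by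
    intro f hf
    simp only [Function.Injective, Function.comp_apply, not_forall, mem_filter, mem_univ,
      true_and] at hf
    obtain ⟨x, y, hxy, hne⟩ := hf
    refine mem_biUnion.mpr ⟨{x, y}, mem_powersetCard_univ.mpr (card_pair hne), ?_⟩
    simp [hxy]
  have hpair : ∀ t ∈ univ.powersetCard 2,
      #{f : α → β | ∀ x ∈ t, ∀ y ∈ t, f (g x) = f (g y)}
        ≤ Fintype.card β ^ (Fintype.card α - 1) := by
    intro t ht
    obtain ⟨x, y, hne, rfl⟩ := card_eq_two.mp (mem_powersetCard_univ.mp ht)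
    refine le_trans (card_le_card fun f hf => ?_) (card_filter_apply_eq_apply_le (hg.ne hne))
    simp only [mem_filter, mem_univ, true_and, mem_insert, mem_singleton] at hf ⊢
    exact hf x (Or.inl rfl) y (Or.inr rfl)
  calc _ ≤ _ := card_le_card hcover
    _ ≤ _ := card_biUnion_le
    _ ≤ _ := sum_le_card_nsmul _ _ _ hpair
    _ = _ := by simp [card_powersetCard]

end Counting

lemma pyrProb_le {m : ℕ} (hm : m ≠ 0) {H : SimpleGraph (Fin (m + 1))} (hconn : H.Preconnected)
    (hstar : ∀ r : ℕ, IsEmpty (H ≃g starGraph r)) (c : ℕ → ℕ) (n : ℕ) :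
    pyrProb H c n ≤ (m.choose 2 : ℝ) / (c n : ℝ) := by
  classical
  have hcount : Nat.card {f : Fin m ⊕ Fin n → Fin (c n) //
      0 < monoCopyCount H (pyramid H n) f} ≤ m.choose 2 * c n ^ (m + n - 1) := by
    calc _ ≤ Nat.card {f : Fin m ⊕ Fin n → Fin (c n) // ¬ Function.Injective (f ∘ Sum.inl)} :=
          Nat.card_mono (Set.toFinite _) fun f =>
            not_injective_comp_inl_of_monoCopyCount_pos hconn hstar
      _ ≤ _ := by
          rw [Nat.card_eq_fintype_card, Fintype.card_subtype]
          simpa using card_filter_not_injective_comp_le (α := Fin m ⊕ Fin n) (β := Fin (c n))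
            Sum.inl_injective
  rw [pyrProb, Fintype.card_sum, Fintype.card_fin, Fintype.card_fin]
  rcases (c n).eq_zero_or_pos with hc | hc
  · simp [hc, hm]
  · have hc' : (0 : ℝ) < c n := by exact_mod_cast hc
    rw [div_le_div_iff₀ (by positivity) hc']
    calc _ ≤ (m.choose 2 * c n ^ (m + n - 1) : ℝ) * c n := by gcongr; exact_mod_cast hcount
      _ = m.choose 2 * (c n : ℝ) ^ (m + n) := by
          rw [mul_assoc, ← pow_succ, Nat.sub_add_cancel (by omega)]

lemma tendsto_natCeil_rpow_atTop {p : ℝ} (hp : 0 < p) :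
    Tendsto (fun n : ℕ => (⌈(n : ℝ) ^ p⌉₊ : ℝ)) atTop atTop :=
  tendsto_atTop_mono (fun _ => Nat.le_ceil _)
    ((tendsto_rpow_atTop hp).comp tendsto_natCast_atTop_atTop)

/-- For a connected non-star `H` and the pyramid `P_n(H)` colored uniformly with
`c_n = ⌈n^{1/(|V(H)|-1)}⌉` colors, the probability that `P_n(H)` contains a monochromatic copy
of `H` is at most `C(|V(H)|-1, 2)/c_n`, which tends to `0`; hence `T(H,P_n(H)) → 0` in
probability. -/
theorem stmt11 {m : ℕ} (H : SimpleGraph (Fin (m + 1))) (hconn : H.Connected)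
    (hstar : ∀ r : ℕ, IsEmpty (H ≃g starGraph r)) (c : ℕ → ℕ)
    (hc : ∀ n, c n = ⌈(n : ℝ) ^ (1 / (m : ℝ))⌉₊) :
    (∀ n : ℕ, pyrProb H c n ≤ (m.choose 2 : ℝ) / (c n : ℝ)) ∧
    Tendsto (fun n => (m.choose 2 : ℝ) / (c n : ℝ)) atTop (nhds 0) ∧
    Tendsto (fun n => pyrProb H c n) atTop (nhds 0) := by
  have hm : m ≠ 0 := by
    rintro rfl
    have : Subsingleton (Fin (0 + 1)) := Fin.subsingleton_one
    exact (hstar 0).false (nonempty_iso_starGraph_of_forall_adj_eq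
      .of_subsingleton (b := 0) fun p _ _ => Or.inl (Subsingleton.elim p 0)).some
  have hbound := pyrProb_le hm hconn.preconnected hstar c
  have hlim : Tendsto (fun n => (m.choose 2 : ℝ) / (c n : ℝ)) atTop (nhds 0) := by
    simp_rw [hc]
    exact tendsto_const_nhds.div_atTop (tendsto_natCeil_rpow_atTop (by positivity))
  exact ⟨hbound, hlim, squeeze_zero (fun n => by rw [pyrProb]; positivity) hbound hlim⟩
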